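/- arXiv:2412.11264 — 3 statements merged into one kernel-verified Lean document; each statement's English description precedes it below -/
import Mathlib

section
/- Let $a \ge 0$, $b \neq 0$, $c \neq 0$, $V_0 \ge 0$, and let $(\Delta_i)_{i \ge 0}$ be positive reals (the time-step sizes). Let $(u_i)_{i \ge 0}$ be any sequence of nonnegative reals. Define recursively, for $i \ge 0$: $\alpha_i = \widehat{V}_i\,\frac{e^{b\Delta_i}-1}{b} + \frac{a}{b}\big(\frac{e^{b\Delta_i}-1}{b} - \Delta_i\big)$, $\sigma_i = c\,\frac{e^{b\Delta_i}-1}{b}$, $z_i = \frac{u_i - \alpha_i}{\sigma_i}$, and $\widehat{V}_{i+1} = \widehat{V}_i + a\Delta_i + b\,u_i + c\,z_i$, with $\widehat{V}_0 = V_0$. Then $\widehat{V}_i \ge 0$ and $\alpha_i \ge 0$ for every $i \ge 0$. -/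
/-!
Write `E = (e^{bΔ} - 1)/b = ∫₀^Δ e^{bs} ds > 0`, so that `σ = cE`. Substituting `z` into the update,
the terms in `V̂ᵢ` cancel and, with `x = bΔ`,
`V̂ᵢ₊₁ = (uᵢ e^x + a (x e^x - e^x + 1)/b²) / E`,
which is nonnegative because `(1 - x) e^x ≤ e^{-x} e^x = 1`. Then `αᵢ = V̂ᵢ E + a (E - Δ)/b ≥ 0`,
since `(E - Δ)/b = (e^x - 1 - x)/b² ≥ 0`.
-/

open Real

lemma mul_exp_sub_exp_add_one_nonneg (x : ℝ) : 0 ≤ x * exp x - exp x + 1 := by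
  have h := mul_le_mul_of_nonneg_right (one_sub_le_exp_neg x) (exp_pos x).le
  rw [← exp_add, neg_add_cancel, exp_zero] at h
  linarith

noncomputable def expFactor (b d : ℝ) : ℝ := (exp (b * d) - 1) / b

lemma expFactor_pos {b d : ℝ} (hb : b ≠ 0) (hd : 0 < d) : 0 < expFactor b d := by
  rcases hb.lt_or_gt with hb | hb
  · exact div_pos_of_neg_of_neg (sub_neg.mpr (exp_lt_one_iff.mpr (mul_neg_of_neg_of_pos hb hd))) hb
  · exact div_pos (sub_pos.mpr (one_lt_exp_iff.mpr (mul_pos hb hd))) hb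

lemma expFactor_sub_div_nonneg (b d : ℝ) : 0 ≤ (expFactor b d - d) / b := by
  rcases eq_or_ne b 0 with rfl | hb
  · simp
  · have h : (expFactor b d - d) / b = (exp (b * d) - 1 - b * d) / b ^ 2 := by
      unfold expFactor
      field_simp
    rw [h]
    exact div_nonneg (by linarith [add_one_le_exp (b * d)]) (sq_nonneg b)

lemma ivi_update_eq {a b c d V u α σ : ℝ} (hb : b ≠ 0) (hc : c ≠ 0) (hd : 0 < d)
    (hα : α = V * expFactor b d + a / b * (expFactor b d - d))
    (hσ : σ = c * expFactor b d) :
    V + a * d + b * u + c * ((u - α) / σ)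
      = (u * exp (b * d) + a * ((b * d) * exp (b * d) - exp (b * d) + 1) / b ^ 2)
          / expFactor b d := by
  have hE := (expFactor_pos hb hd).ne'
  have hexp : exp (b * d) = b * expFactor b d + 1 := by
    unfold expFactor
    field_simp
    ring
  subst hα hσ
  rw [hexp]
  field_simp
  ring

lemma ivi_update_nonneg {a b c d V u α σ : ℝ} (ha : 0 ≤ a) (hb : b ≠ 0) (hc : c ≠ 0)
    (hd : 0 < d) (hu : 0 ≤ u)
    (hα : α = V * expFactor b d + a / b * (expFactor b d - d))
    (hσ : σ = c * expFactor b d) :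
    0 ≤ V + a * d + b * u + c * ((u - α) / σ) := by
  rw [ivi_update_eq hb hc hd hα hσ]
  have := mul_exp_sub_exp_add_one_nonneg (b * d)
  have := expFactor_pos hb hd
  positivity

/-- Non-negativity of the iVi scheme: the discretized process `Vh` and the mean
parameters `α` stay nonnegative. -/
theorem stmt_1 (a b c V0 : ℝ) (ha : 0 ≤ a) (hb : b ≠ 0) (hc : c ≠ 0) (hV0 : 0 ≤ V0)
    (Δ : ℕ → ℝ) (hΔ : ∀ i, 0 < Δ i)
    (u : ℕ → ℝ) (hu : ∀ i, 0 ≤ u i)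
    (Vh α σ z : ℕ → ℝ)
    (hVzero : Vh 0 = V0)
    (hα : ∀ i, α i = Vh i * ((Real.exp (b * Δ i) - 1) / b)
        + a / b * ((Real.exp (b * Δ i) - 1) / b - Δ i))
    (hσ : ∀ i, σ i = c * ((Real.exp (b * Δ i) - 1) / b))
    (hz : ∀ i, z i = (u i - α i) / σ i)
    (hV : ∀ i, Vh (i + 1) = Vh i + a * Δ i + b * u i + c * z i) :
    ∀ i, 0 ≤ Vh i ∧ 0 ≤ α i := by
  have hVh : ∀ i, 0 ≤ Vh i := by
    rintro (_ | i)
    · exact hVzero ▸ hV0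
    · rw [hV i, hz i]
      exact ivi_update_nonneg ha hb hc (hΔ i) (hu i) (hα i) (hσ i)
  intro i
  refine ⟨hVh i, ?_⟩
  have hE : 0 ≤ expFactor b (Δ i) := (expFactor_pos hb (hΔ i)).le
  have hdrift : 0 ≤ a / b * (expFactor b (Δ i) - Δ i) := by
    rw [div_mul_eq_mul_div, mul_div_assoc]
    exact mul_nonneg ha (expFactor_sub_div_nonneg b (Δ i))
  rw [hα i]
  exact add_nonneg (mul_nonneg (hVh i) hE) hdrift
end

section
/- Let $a \ge 0$, $v \ge 0$, $b \neq 0$, $c \neq 0$, $\Delta > 0$, with not both $v = 0$ and $a = 0$. Set $\alpha = v\,\frac{e^{b\Delta}-1}{b} + \frac{a}{b}\big(\frac{e^{b\Delta}-1}{b} - \Delta\big)$ and $\sigma = c\,\frac{e^{b\Delta}-1}{b}$, and let $f(x) = \sqrt{\frac{\lambda}{2\pi x^3}}\exp\big(-\frac{\lambda(x-\mu)^2}{2\mu^2 x}\big)$ be the Inverse Gaussian density with parameters $\mu = \alpha$, $\lambda = \alpha^2/\sigma^2$. Then $\int_0^\infty \Big(v + a\Delta + b\,x + c\,\frac{x-\alpha}{\sigma}\Big)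 f(x)\, dx = v\, e^{b\Delta} + \frac{a}{b}\big(e^{b\Delta} - 1\big)$. -/
/-!
Write `φ`, `Φ` for the standard normal density and a primitive of it, and put
`u(x) = √(λ/x) (x/μ - 1)`, `v(x) = √(λ/x) (x/μ + 1)`. Then `v² = u² + 4λ/μ`, so
`e^{2λ/μ} φ(v) = φ(u)`, and a short computation shows that the Inverse Gaussian density `f`
satisfies `f = φ(u) u' - e^{2λ/μ} φ(v) v'` and `x f / μ = φ(u) u' + e^{2λ/μ} φ(v) v'`.
Thus `Φ(u) ∓ e^{2λ/μ} Φ(v)` are primitives of `f` and `x f / μ` on `(0, ∞)`. As `x` runs over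
`(0, ∞)`, `u` runs from `-∞` to `∞` while `v` tends to `∞` at both ends, so the `IG(μ, λ)` law
has mass `1` and mean `μ`. The theorem is this mean applied to an affine integrand, once the
hypotheses are seen to give `α > 0`; the rest is algebra in `e^{bΔ}`.
-/

open Real MeasureTheory Set Filter Topology ProbabilityTheory

lemma integral_Ioi_of_hasDerivAt_of_nonneg_of_tendsto_nhdsGT {g g' : ℝ → ℝ} {a l₀ l : ℝ}
    (hg₀ : Tendsto g (𝓝[>] a) (𝓝 l₀)) (hderiv : ∀ x ∈ Ioi a, HasDerivAt g (g' x) x)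
    (hg'_nonneg : ∀ x ∈ Ioi a, 0 ≤ g' x) (hg : Tendsto g atTop (𝓝 l)) :
    IntegrableOn g' (Ioi a) ∧ ∫ x in Ioi a, g' x = l - l₀ := by
  classical
  set g₀ := Function.update g a l₀
  have hcont : ContinuousWithinAt g₀ (Ici a) a := by
    rwa [continuousWithinAt_update_same, Ici_sdiff_left]
  have hderiv₀ : ∀ x ∈ Ioi a, HasDerivAt g₀ (g' x) x := fun x hx =>
    (hderiv x hx).congr_of_eventuallyEq <| by
      filter_upwards [Ioi_mem_nhds hx] with y hy
      exact Function.update_of_ne hy.ne' _ _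
  have hg₀_top : Tendsto g₀ atTop (𝓝 l) := hg.congr' <| by
    filter_upwards [Ioi_mem_atTop a] with y hy
    exact (Function.update_of_ne hy.ne' _ _).symm
  refine ⟨integrableOn_Ioi_deriv_of_nonneg hcont hderiv₀ hg'_nonneg hg₀_top, ?_⟩
  rw [integral_Ioi_of_hasDerivAt_of_nonneg hcont hderiv₀ hg'_nonneg hg₀_top]
  simp [g₀]

lemma continuous_gaussianPDFReal (μ : ℝ) (v : NNReal) : Continuous (gaussianPDFReal μ v) := by
  unfold gaussianPDFReal; fun_prop

/-- Normalized at `0`: only the difference `1` of its limits at `±∞` matters below. -/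
noncomputable def gaussianPrimitive (t : ℝ) : ℝ := ∫ s in (0 : ℝ)..t, gaussianPDFReal 0 1 s

lemma hasDerivAt_gaussianPrimitive (t : ℝ) :
    HasDerivAt gaussianPrimitive (gaussianPDFReal 0 1 t) t :=
  ((continuous_gaussianPDFReal 0 1).integral_hasStrictDerivAt 0 t).hasDerivAt

lemma tendsto_gaussianPrimitive_atTop :
    Tendsto gaussianPrimitive atTop (𝓝 (∫ s in Ioi 0, gaussianPDFReal 0 1 s)) :=
  intervalIntegral_tendsto_integral_Ioi 0 (integrable_gaussianPDFReal 0 1).integrableOn tendsto_id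

lemma tendsto_gaussianPrimitive_atBot :
    Tendsto gaussianPrimitive atBot (𝓝 ((∫ s in Ioi 0, gaussianPDFReal 0 1 s) - 1)) := by
  have hIic := intervalIntegral_tendsto_integral_Iic 0
    (integrable_gaussianPDFReal 0 1).integrableOn tendsto_id
  have htotal :
      (∫ s in Iic 0, gaussianPDFReal 0 1 s) + ∫ s in Ioi 0, gaussianPDFReal 0 1 s = 1 := by
    rw [intervalIntegral.integral_Iic_add_Ioi (integrable_gaussianPDFReal 0 1).integrableOn
      (integrable_gaussianPDFReal 0 1).integrableOn, integral_gaussianPDFReal_eq_one 0 one_ne_zero]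
  convert hIic.neg using 2
  · exact intervalIntegral.integral_symm _ _
  · linarith

section SqrtCombination

variable {p q : ℝ}

lemma hasDerivAt_mul_sqrt_add_div_sqrt {x : ℝ} (hx : 0 < x) :
    HasDerivAt (fun y => p * √y + q / √y) ((p * x - q) / (2 * x * √x)) x := by
  have hsqrt := hasDerivAt_sqrt hx.ne'
  have hsx : √x ≠ 0 := (sqrt_pos.2 hx).ne'
  refine ((hsqrt.const_mul p).add ((hasDerivAt_const x q).div hsqrt hsx)).congr_deriv ?_
  rw [sq_sqrt hx.le]
  field_simp
  ring

lemma tendsto_mul_sqrt_add_div_sqrt_atTop (hp : 0 < p) :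
    Tendsto (fun y => p * √y + q / √y) atTop atTop := by
  have hsqrt : Tendsto (fun y : ℝ => √y) atTop atTop := tendsto_sqrt_atTop
  refine ((tendsto_const_mul_atTop_of_pos hp).2 hsqrt).atTop_add (C := 0) ?_
  simpa [div_eq_mul_inv] using hsqrt.inv_tendsto_atTop.const_mul q

lemma tendsto_sqrt_nhdsGT_zero : Tendsto (fun y : ℝ => √y) (𝓝[>] 0) (𝓝[>] 0) := by
  refine tendsto_nhdsWithin_of_tendsto_nhds_of_eventually_within _ ?_ ?_
  · simpa using (continuous_sqrt.tendsto 0).mono_left nhdsWithin_le_nhds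
  · filter_upwards [self_mem_nhdsWithin] with y hy using sqrt_pos.2 hy

lemma tendsto_mul_sqrt_nhdsGT_zero : Tendsto (fun y => p * √y) (𝓝[>] 0) (𝓝 0) := by
  simpa using (tendsto_sqrt_nhdsGT_zero.mono_right nhdsWithin_le_nhds).const_mul p

lemma tendsto_div_sqrt_nhdsGT_zero_atTop (hq : 0 < q) :
    Tendsto (fun y => q / √y) (𝓝[>] 0) atTop := by
  simpa [div_eq_mul_inv] using tendsto_sqrt_nhdsGT_zero.inv_tendsto_nhdsGT_zero.const_mul_atTop hq

lemma tendsto_mul_sqrt_add_div_sqrt_nhdsGT_zero_atTop (hq : 0 < q) :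
    Tendsto (fun y => p * √y + q / √y) (𝓝[>] 0) atTop :=
  tendsto_mul_sqrt_nhdsGT_zero.add_atTop (tendsto_div_sqrt_nhdsGT_zero_atTop hq)

lemma tendsto_mul_sqrt_add_div_sqrt_nhdsGT_zero_atBot (hq : q < 0) :
    Tendsto (fun y => p * √y + q / √y) (𝓝[>] 0) atBot :=
  tendsto_mul_sqrt_nhdsGT_zero.add_atBot <| by
    simpa [neg_div, Function.comp_def] using
      tendsto_neg_atTop_atBot.comp (tendsto_div_sqrt_nhdsGT_zero_atTop (neg_pos.2 hq))

end SqrtCombination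

noncomputable def invGaussianPDFReal (μ lam x : ℝ) : ℝ :=
  √(lam / (2 * π * x ^ 3)) * exp (-(lam * (x - μ) ^ 2 / (2 * μ ^ 2 * x)))

namespace InvGaussian

/-- The `u` of the header, in the shape `p √x + q / √x` of the lemmas above; `upperArg` is `v`. -/
noncomputable def lowerArg (μ lam x : ℝ) : ℝ := √lam / μ * √x + -√lam / √x

noncomputable def upperArg (μ lam x : ℝ) : ℝ := √lam / μ * √x + √lam / √x

variable {μ lam x : ℝ}

lemma gaussianPDFReal_zero_one (z : ℝ) :
    gaussianPDFReal 0 1 z = (√(2 * π))⁻¹ * exp (-z ^ 2 / 2) := by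
  simp [gaussianPDFReal]

lemma lowerArg_sq (hμ : 0 < μ) (hlam : 0 < lam) (hx : 0 < x) :
    lowerArg μ lam x ^ 2 = lam * (x - μ) ^ 2 / (μ ^ 2 * x) := by
  rw [lowerArg]
  field_simp
  rw [sq_sqrt hx.le, sq_sqrt hlam.le]
  ring

lemma upperArg_sq (hμ : 0 < μ) (hlam : 0 < lam) (hx : 0 < x) :
    upperArg μ lam x ^ 2 = lowerArg μ lam x ^ 2 + 4 * lam / μ := by
  rw [lowerArg, upperArg]
  field_simp
  rw [sq_sqrt hlam.le]
  ring

lemma invGaussianPDFReal_eq (hμ : 0 < μ) (hlam : 0 < lam) (hx : 0 < x) :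
    invGaussianPDFReal μ lam x = gaussianPDFReal 0 1 (lowerArg μ lam x) * (√lam / (x * √x)) := by
  have hsx : 0 < √x := sqrt_pos.2 hx
  have hsqrt : √(lam / (2 * π * x ^ 3)) = (√(2 * π))⁻¹ * (√lam / (x * √x)) := by
    rw [← sqrt_sq (show 0 ≤ (√(2 * π))⁻¹ * (√lam / (x * √x)) by positivity)]
    congr 1
    rw [mul_pow, div_pow, inv_pow, sq_sqrt hlam.le, sq_sqrt (by positivity), mul_pow,
      sq_sqrt hx.le]
    field_simp
  rw [invGaussianPDFReal, gaussianPDFReal_zero_one, lowerArg_sq hμ hlam hx, hsqrt]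
  field_simp

lemma exp_mul_gaussianPDFReal_upperArg (hμ : 0 < μ) (hlam : 0 < lam) (hx : 0 < x) :
    exp (2 * lam / μ) * gaussianPDFReal 0 1 (upperArg μ lam x)
      = gaussianPDFReal 0 1 (lowerArg μ lam x) := by
  rw [gaussianPDFReal_zero_one, gaussianPDFReal_zero_one, upperArg_sq hμ hlam hx,
    mul_left_comm, ← exp_add]
  ring_nf

lemma hasDerivAt_gaussianPrimitive_comp {f : ℝ → ℝ} {f' : ℝ} (hf : HasDerivAt f f' x) :
    HasDerivAt (fun y => gaussianPrimitive (f y)) (gaussianPDFReal 0 1 (f x) * f') x :=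
  (hasDerivAt_gaussianPrimitive (f x)).comp x hf

lemma hasDerivAt_lowerArg (hx : 0 < x) :
    HasDerivAt (lowerArg μ lam) ((√lam / μ * x + √lam) / (2 * x * √x)) x :=
  (hasDerivAt_mul_sqrt_add_div_sqrt hx).congr_deriv (by ring)

lemma hasDerivAt_upperArg (hx : 0 < x) :
    HasDerivAt (upperArg μ lam) ((√lam / μ * x - √lam) / (2 * x * √x)) x :=
  hasDerivAt_mul_sqrt_add_div_sqrt hx

lemma hasDerivAt_primitive_pdf (hμ : 0 < μ) (hlam : 0 < lam) (hx : 0 < x) :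
    HasDerivAt (fun y => gaussianPrimitive (lowerArg μ lam y)
        - exp (2 * lam / μ) * gaussianPrimitive (upperArg μ lam y))
      (invGaussianPDFReal μ lam x) x := by
  have hlower := hasDerivAt_gaussianPrimitive_comp (hasDerivAt_lowerArg (lam := lam) (μ := μ) hx)
  have hupper := hasDerivAt_gaussianPrimitive_comp (hasDerivAt_upperArg (lam := lam) (μ := μ) hx)
  refine (hlower.sub (hupper.const_mul _)).congr_deriv ?_
  rw [← mul_assoc, exp_mul_gaussianPDFReal_upperArg hμ hlam hx,
    invGaussianPDFReal_eq hμ hlam hx]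
  field_simp
  ring

lemma hasDerivAt_primitive_mul_pdf (hμ : 0 < μ) (hlam : 0 < lam) (hx : 0 < x) :
    HasDerivAt (fun y => μ * (gaussianPrimitive (lowerArg μ lam y)
        + exp (2 * lam / μ) * gaussianPrimitive (upperArg μ lam y)))
      (x * invGaussianPDFReal μ lam x) x := by
  have hlower := hasDerivAt_gaussianPrimitive_comp (hasDerivAt_lowerArg (lam := lam) (μ := μ) hx)
  have hupper := hasDerivAt_gaussianPrimitive_comp (hasDerivAt_upperArg (lam := lam) (μ := μ) hx)
  refine ((hlower.add (hupper.const_mul _)).const_mul μ).congr_deriv ?_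
  rw [← mul_assoc _ (gaussianPDFReal 0 1 _), exp_mul_gaussianPDFReal_upperArg hμ hlam hx,
    invGaussianPDFReal_eq hμ hlam hx]
  field_simp
  ring

lemma tendsto_lowerArg_atTop (hμ : 0 < μ) (hlam : 0 < lam) :
    Tendsto (lowerArg μ lam) atTop atTop :=
  tendsto_mul_sqrt_add_div_sqrt_atTop (div_pos (sqrt_pos.2 hlam) hμ)

lemma tendsto_upperArg_atTop (hμ : 0 < μ) (hlam : 0 < lam) :
    Tendsto (upperArg μ lam) atTop atTop :=
  tendsto_mul_sqrt_add_div_sqrt_atTop (div_pos (sqrt_pos.2 hlam) hμ)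

lemma tendsto_lowerArg_nhdsGT_zero (hlam : 0 < lam) : Tendsto (lowerArg μ lam) (𝓝[>] 0) atBot :=
  tendsto_mul_sqrt_add_div_sqrt_nhdsGT_zero_atBot (neg_neg_of_pos (sqrt_pos.2 hlam))

lemma tendsto_upperArg_nhdsGT_zero (hlam : 0 < lam) : Tendsto (upperArg μ lam) (𝓝[>] 0) atTop :=
  tendsto_mul_sqrt_add_div_sqrt_nhdsGT_zero_atTop (sqrt_pos.2 hlam)

lemma invGaussianPDFReal_nonneg (μ lam x : ℝ) : 0 ≤ invGaussianPDFReal μ lam x := by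
  unfold invGaussianPDFReal
  positivity

theorem integrableOn_invGaussianPDFReal_and_integral_eq_one (hμ : 0 < μ) (hlam : 0 < lam) :
    IntegrableOn (invGaussianPDFReal μ lam) (Ioi 0)
      ∧ ∫ x in Ioi 0, invGaussianPDFReal μ lam x = 1 := by
  have h := integral_Ioi_of_hasDerivAt_of_nonneg_of_tendsto_nhdsGT
    ((tendsto_gaussianPrimitive_atBot.comp (tendsto_lowerArg_nhdsGT_zero hlam)).sub
      ((tendsto_gaussianPrimitive_atTop.comp (tendsto_upperArg_nhdsGT_zero hlam)).const_mul
        (exp (2 * lam / μ))))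
    (fun x hx => hasDerivAt_primitive_pdf hμ hlam hx) (fun x _ => invGaussianPDFReal_nonneg μ lam x)
    ((tendsto_gaussianPrimitive_atTop.comp (tendsto_lowerArg_atTop hμ hlam)).sub
      ((tendsto_gaussianPrimitive_atTop.comp (tendsto_upperArg_atTop hμ hlam)).const_mul
        (exp (2 * lam / μ))))
  exact ⟨h.1, h.2.trans (by ring)⟩

theorem integrableOn_mul_invGaussianPDFReal_and_integral_eq (hμ : 0 < μ) (hlam : 0 < lam) :
    IntegrableOn (fun x => x * invGaussianPDFReal μ lam x) (Ioi 0)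
      ∧ ∫ x in Ioi 0, x * invGaussianPDFReal μ lam x = μ := by
  have h := integral_Ioi_of_hasDerivAt_of_nonneg_of_tendsto_nhdsGT
    (((tendsto_gaussianPrimitive_atBot.comp (tendsto_lowerArg_nhdsGT_zero hlam)).add
      ((tendsto_gaussianPrimitive_atTop.comp (tendsto_upperArg_nhdsGT_zero hlam)).const_mul
        (exp (2 * lam / μ)))).const_mul μ)
    (fun x hx => hasDerivAt_primitive_mul_pdf hμ hlam hx)
    (fun x hx => mul_nonneg (le_of_lt hx) (invGaussianPDFReal_nonneg μ lam x))
    (((tendsto_gaussianPrimitive_atTop.comp (tendsto_lowerArg_atTop hμ hlam)).add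
      ((tendsto_gaussianPrimitive_atTop.comp (tendsto_upperArg_atTop hμ hlam)).const_mul
        (exp (2 * lam / μ)))).const_mul μ)
  exact ⟨h.1, h.2.trans (by ring)⟩

theorem integral_affine_mul_invGaussianPDFReal (hμ : 0 < μ) (hlam : 0 < lam) (A B : ℝ) :
    ∫ x in Ioi 0, (A + B * x) * invGaussianPDFReal μ lam x = A + B * μ := by
  obtain ⟨hint₀, hmass⟩ := integrableOn_invGaussianPDFReal_and_integral_eq_one hμ hlam
  obtain ⟨hint₁, hmean⟩ := integrableOn_mul_invGaussianPDFReal_and_integral_eq hμ hlam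
  simp_rw [add_mul, mul_assoc]
  rw [integral_add (hint₀.const_mul A) (hint₁.const_mul B), integral_const_mul, integral_const_mul,
    hmass, hmean, mul_one]

end InvGaussian

lemma exp_mul_sub_one_div_pos {b Δ : ℝ} (hb : b ≠ 0) (hΔ : 0 < Δ) :
    0 < (exp (b * Δ) - 1) / b := by
  rcases hb.lt_or_gt with hb_neg | hb_pos
  · exact div_pos_of_neg_of_neg
      (sub_neg.2 (exp_lt_one_iff.2 (mul_neg_of_neg_of_pos hb_neg hΔ))) hb_neg
  · exact div_pos (sub_pos.2 (one_lt_exp_iff.2 (mul_pos hb_pos hΔ))) hb_pos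

lemma exp_mul_sub_one_div_sub_div_pos {b Δ : ℝ} (hb : b ≠ 0) (hΔ : 0 < Δ) :
    0 < ((exp (b * Δ) - 1) / b - Δ) / b := by
  have hquot : ((exp (b * Δ) - 1) / b - Δ) / b = (exp (b * Δ) - (b * Δ + 1)) / b ^ 2 := by
    field_simp
    ring
  rw [hquot]
  exact div_pos (sub_pos.2 (add_one_lt_exp (mul_ne_zero hb hΔ.ne'))) (by positivity)

/-- First-conditional-moment matching of the iVi scheme: the expectation of the one-step
update under the Inverse Gaussian distribution `IG(α, α²/σ²)` equals the exact conditional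
mean of the square-root process. -/
theorem stmt_9 (a v b c Δ : ℝ) (ha : 0 ≤ a) (hv : 0 ≤ v) (hb : b ≠ 0) (hc : c ≠ 0)
    (hΔ : 0 < Δ) (hva : ¬(v = 0 ∧ a = 0))
    (α σ lam : ℝ)
    (hα : α = v * ((Real.exp (b * Δ) - 1) / b)
        + a / b * ((Real.exp (b * Δ) - 1) / b - Δ))
    (hσ : σ = c * ((Real.exp (b * Δ) - 1) / b))
    (hlam : lam = α ^ 2 / σ ^ 2) :
    ∫ x in Set.Ioi (0 : ℝ),
      (v + a * Δ + b * x + c * ((x - α) / σ))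
        * (Real.sqrt (lam / (2 * Real.pi * x ^ 3))
            * Real.exp (-(lam * (x - α) ^ 2 / (2 * α ^ 2 * x))))
      = v * Real.exp (b * Δ) + a / b * (Real.exp (b * Δ) - 1) := by
  have hE₁ := exp_mul_sub_one_div_pos hb hΔ
  have hE₂ := exp_mul_sub_one_div_sub_div_pos hb hΔ
  have hα₀ : 0 < α := by
    rw [hα, div_mul_eq_mul_div, mul_div_assoc]
    rcases not_and_or.mp hva with hv₀ | ha₀
    · exact add_pos_of_pos_of_nonneg (mul_pos (hv.lt_of_ne' hv₀) hE₁) (mul_nonneg ha hE₂.le)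
    · exact add_pos_of_nonneg_of_pos (mul_nonneg hv hE₁.le) (mul_pos (ha.lt_of_ne' ha₀) hE₂)
  have hσ₀ : σ ≠ 0 := hσ ▸ mul_ne_zero hc hE₁.ne'
  have hlam₀ : 0 < lam := hlam ▸ by positivity
  calc _ = ∫ x in Ioi 0, ((v + a * Δ - c * α / σ) + (b + c / σ) * x)
          * invGaussianPDFReal α lam x := by
        refine setIntegral_congr_fun measurableSet_Ioi fun x _ => ?_
        rw [invGaussianPDFReal]
        congr 1
        field_simp
        ring
    _ = (v + a * Δ - c * α / σ) + (b + c / σ) * α :=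
        InvGaussian.integral_affine_mul_invGaussianPDFReal hα₀ hlam₀ _ _
    _ = v + a * Δ + b * α := by
        field_simp
        ring
    _ = _ := by
        rw [hα]
        field_simp
        ring
end

section
/- Let $a, b, c, \rho \in \mathbb{R}$ with $c \neq 0$, let $u, w \in \mathbb{C}$, set $\beta = -b - u\rho c$, let $D \in \mathbb{C}$ satisfy $D^2 = \beta^2 + c^2(-2w + u - u^2)$, assume $\beta + D \neq 0$, set $G = \frac{\beta - D}{\beta + D}$, assume $G \neq 1$, and let $T > 0$ be such that for all $t \in [0,T]$ the complex number $\frac{G e^{-Dt} - 1}{G - 1}$ lies off the closed negative real axis $(-\infty, 0]$. Define $\phi(t) = \frac{a}{c^2}\Big((\beta - D)t - 2\,\mathrm{Log}\Big(\frac{G e^{-Dt} - 1}{G - 1}\Big)\Big)$ and $\psi(t) = \frac{\beta - D}{c^2}\cdot\frac{1 - e^{-Dt}}{1 - G e^{-Dt}}$, where $\mathrm{Log}$ is the principal branch of the complex logarithm. Then $\phi(0) = 0$ and for every $t \in [0,T]$, $\phi$ is differentiable at $t$ with $\phi'(t) = a\,\psi(t)$. -/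
open Real Complex

/-! The logarithmic derivative of `(G e^{-Dt} - 1) / (G - 1)` is `-D G e^{-Dt} / (G e^{-Dt} - 1)`,
so `φ' = a ψ` becomes, after cancelling `a / c²` and clearing denominators, the relation
`G (β + D) = β - D` defining `G`. -/

lemma hasDerivAt_const_mul_ofReal (z : ℂ) (t : ℝ) :
    HasDerivAt (fun s : ℝ => z * s) z t := by
  simpa using ((hasDerivAt_id t).ofReal_comp).const_mul z

lemma hasDerivAt_log_div_sub_one {G D : ℂ} {t : ℝ}
    (h : (G * exp (-D * t) - 1) / (G - 1) ∈ slitPlane) :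
    HasDerivAt (fun s : ℝ => log ((G * exp (-D * s) - 1) / (G - 1)))
      (-D * G * exp (-D * t) / (G * exp (-D * t) - 1)) t := by
  have hquot : (G * exp (-D * t) - 1) / (G - 1) ≠ 0 := slitPlane_ne_zero h
  -- `G - 1 ≠ 0` comes for free: `x / 0 = 0` is not in the slit plane.
  obtain ⟨hnum, hden⟩ := div_ne_zero_iff.1 hquot
  have hexp := (hasDerivAt_const_mul_ofReal (-D) t).cexp
  convert (((hexp.const_mul G).sub_const 1).div_const (G - 1)).clog_real h using 1
  field_simp

lemma sub_sub_two_mul_logDeriv_eq {β D G x : ℂ} (hG : G * (β + D) = β - D)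
    (hx : G * x - 1 ≠ 0) :
    (β - D) - 2 * (-D * G * x / (G * x - 1)) = (β - D) * ((1 - x) / (1 - G * x)) := by
  have hx' : 1 - G * x ≠ 0 := by rwa [← neg_sub, neg_ne_zero]
  field_simp
  linear_combination (-(G * x - 1) * x) * hG

theorem stmt_14_general (a c : ℝ)
    (β D G : ℂ)
    (hβD : β + D ≠ 0)
    (hG : G = (β - D) / (β + D))
    (T : ℝ)
    (hslit : ∀ t ∈ Set.Icc (0 : ℝ) T,
      (G * Complex.exp (-D * t) - 1) / (G - 1) ∈ Complex.slitPlane)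
    (φ ψ : ℝ → ℂ)
    (hφ : ∀ t : ℝ, φ t = (a : ℂ) / (c : ℂ) ^ 2
        * ((β - D) * t - 2 * Complex.log ((G * Complex.exp (-D * t) - 1) / (G - 1))))
    (hψ : ∀ t : ℝ, ψ t = (β - D) / (c : ℂ) ^ 2
        * ((1 - Complex.exp (-D * t)) / (1 - G * Complex.exp (-D * t)))) :
    φ 0 = 0 ∧ ∀ t ∈ Set.Icc (0 : ℝ) T, HasDerivAt φ ((a : ℂ) * ψ t) t := by
  have hGβD : G * (β + D) = β - D := by rw [hG, div_mul_cancel₀ _ hβD]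
  obtain rfl : φ = _ := funext hφ
  refine ⟨by simp, fun t ht => ?_⟩
  have hlog := hasDerivAt_log_div_sub_one (hslit t ht)
  have hnum : G * exp (-D * t) - 1 ≠ 0 :=
    (div_ne_zero_iff.1 (slitPlane_ne_zero (hslit t ht))).1
  refine (((hasDerivAt_const_mul_ofReal (β - D) t).sub (hlog.const_mul 2)).const_mul
    ((a : ℂ) / (c : ℂ) ^ 2)).congr_deriv ?_
  rw [hψ t, sub_sub_two_mul_logDeriv_eq hGβD hnum]
  ring

/-- The explicit closed-form `φ` of the Heston model satisfies `φ' = a ψ` with `φ(0) = 0`,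
under the branch-avoidance hypothesis (membership in the slit plane, i.e. off the closed
negative real axis) ensuring the principal logarithm is differentiable along the path. -/
theorem stmt_14 (a b c ρ : ℝ) (hc : c ≠ 0) (u w : ℂ)
    (β D G : ℂ)
    (hβ : β = -(b : ℂ) - u * (ρ : ℂ) * (c : ℂ))
    (hD : D ^ 2 = β ^ 2 + (c : ℂ) ^ 2 * (-2 * w + u - u ^ 2))
    (hβD : β + D ≠ 0)
    (hG : G = (β - D) / (β + D))
    (hG1 : G ≠ 1)
    (T : ℝ) (hT : 0 < T)
    (hslit : ∀ t ∈ Set.Icc (0 : ℝ) T,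
      (G * Complex.exp (-D * t) - 1) / (G - 1) ∈ Complex.slitPlane)
    (φ ψ : ℝ → ℂ)
    (hφ : ∀ t : ℝ, φ t = (a : ℂ) / (c : ℂ) ^ 2
        * ((β - D) * t - 2 * Complex.log ((G * Complex.exp (-D * t) - 1) / (G - 1))))
    (hψ : ∀ t : ℝ, ψ t = (β - D) / (c : ℂ) ^ 2
        * ((1 - Complex.exp (-D * t)) / (1 - G * Complex.exp (-D * t)))) :
    φ 0 = 0 ∧ ∀ t ∈ Set.Icc (0 : ℝ) T, HasDerivAt φ ((a : ℂ) * ψ t) t :=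
  stmt_14_general a c β D G hβD hG T hslit φ ψ hφ hψ
end
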